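/- Turning the input string into the initial configuration: for every deterministic binary Turing machine with input M = (Q, s_in, s_T, s_F, δ) there is a closed λ-term init of Λ_det such that for every value k and every input string i ∈ B_I* of the form L·s'·R with s' ∈ B*, init k ⟨i⟩ →det^m k ⟨C_in(i)⟩, where m is a constant (m = 5) independent of i and k, and C_in(i) = (i, 0 | ε, □, ε | s_in) is the initial configuration of M on i. -/

import Mathlib

namespace LogTM

/-- Untyped λ-terms with de Bruijn indices. -/
inductive Lam : Type
  | var : ℕ → Lam
  | lam : Lam → Lam
  | app : Lam → Lam → Lam

namespace Lam

/-- Values: variables and abstractions. -/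
def IsValue : Lam → Prop
  | var _ => True
  | lam _ => True
  | app _ _ => False

/-- Terms of the deterministic λ-calculus `Λ_det`:
    the argument of every application is a value. -/
def InDet : Lam → Prop
  | var _ => True
  | lam t => InDet t
  | app t u => InDet t ∧ InDet u ∧ IsValue u

/-- Shift the free variables `≥ d` by one. -/
def lift : ℕ → Lam → Lam
  | d, var n => if n < d then var n else var (n + 1)
  | d, lam t => lam (lift (d + 1) t)
  | d, app t u => app (lift d t) (lift d u)

/-- Capture-avoiding substitution `t[k := u]`. -/
def subst : Lam → ℕ → Lam → Lam
  | var n, k, u => if n < k then var n else if n = k then u else var (n - 1)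
  | lam t, k, u => lam (subst t (k + 1) (lift 0 u))
  | app t s, k, u => app (subst t k u) (subst s k u)

/-- Weak evaluation `→det` of the deterministic λ-calculus: β at the root,
    closed under evaluation contexts `E ::= ⟨·⟩ | E v`. -/
inductive Step : Lam → Lam → Prop
  | beta {t v : Lam} : IsValue v → Step (app (lam t) v) (subst t 0 v)
  | appL {t t' v : Lam} : IsValue v → Step t t' → Step (app t v) (app t' v)

/-- `n`-fold iteration of `→det`. -/
inductive StepN : ℕ → Lam → Lam → Prop
  | refl (t : Lam) : StepN 0 t t
  | head {n : ℕ} {t u r : Lam} : Step t u → StepN n u r → StepN (n + 1) t r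

/-- All free variables are `< d`. -/
def ClosedUnder : ℕ → Lam → Prop
  | d, var n => n < d
  | d, lam t => ClosedUnder (d + 1) t
  | d, app t u => ClosedUnder d t ∧ ClosedUnder d u

/-- Closed terms. -/
def Closed (t : Lam) : Prop := ClosedUnder 0 t

end Lam

/-- `n` nested abstractions. -/
def iterLam : ℕ → Lam → Lam
  | 0, t => t
  | n + 1, t => .lam (iterLam n t)

/-- Left-nested applications. -/
def mkApps : Lam → List Lam → Lam
  | t, [] => t
  | t, u :: us => mkApps (.app t u) us

/-- Scott encoding of the character `a` of a `k`-letter (ordered) alphabet: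
    `⟨a_i⟩ = λx_1…λx_k.x_i`. -/
def encChar (k : ℕ) (a : Fin k) : Lam := iterLam k (.var (k - 1 - (a : ℕ)))

/-- Scott encoding of strings over a `k`-letter (ordered) alphabet:
    `⟨ε⟩ = λx_1…λx_k.λx_ε.x_ε` and `⟨a_i·r⟩ = λx_1…λx_k.λx_ε.x_i ⟨r⟩`. -/
def encStr (k : ℕ) : List (Fin k) → Lam
  | [] => iterLam (k + 1) (.var 0)
  | a :: r => iterLam (k + 1) (.app (.var (k - (a : ℕ))) (encStr k r))

/-- Scott encoding of binary strings (alphabet `{0,1}`, `false = 0 < 1 = true`). -/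
def encBits : List Bool → Lam
  | [] => .lam (.lam (.lam (.var 0)))
  | false :: s => .lam (.lam (.lam (.app (.var 2) (encBits s))))
  | true :: s => .lam (.lam (.lam (.app (.var 1) (encBits s))))

/-- Successor on reversed binary strings. -/
def rsucc : List Bool → List Bool
  | [] => [true]
  | false :: s => true :: s
  | true :: s => false :: rsucc s

/-- Predecessor on (nonempty) reversed binary strings. -/
def rpred : List Bool → List Bool
  | [] => []
  | false :: s => true :: rpred s
  | [true] => []
  | true :: b :: s => false :: b :: s

/-- Lookup of the `(n+1)`-th character of a string using a reversed-binary counter. -/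
def rlookup {α : Type*} : List Bool → List α → Option α
  | _, [] => none
  | [], c :: _ => some c
  | b :: nb, _ :: s => rlookup (rpred (b :: nb)) s

/-- Input alphabet `B_I = {0, 1, L, R}`. -/
inductive BI : Type
  | b0 | b1 | bL | bR

/-- Work alphabet `B_W = {0, 1, □}`. -/
inductive BW : Type
  | w0 | w1 | wB

/-- Input head moves `{-1, +1, 0}`. -/
inductive IDir : Type
  | minus | plus | zero

/-- Work head moves `{←, →, ↓}`. -/
inductive WDir : Type
  | left | right | stay

/-- A deterministic binary Turing machine with input: states `Fin Q`, initial state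
    `qin`, final states `qT` and `qF`, and a partial transition function `δ` that is
    undefined on the final states. -/
structure TM where
  Q : ℕ
  qin : Fin Q
  qT : Fin Q
  qF : Fin Q
  δ : BI → BW → Fin Q → Option (IDir × BW × WDir × Fin Q)
  δ_final : ∀ b a s, (s = qT ∨ s = qF) → δ b a s = none

/-- A configuration `(i, n | w_l, a, w_r | s)`: read-only input `i`, input-head
    position `n`, work tape `w_l, a, w_r` (head on `a`), current state `s`. -/
structure Config (M : TM) where
  input : List BI
  pos : ℕ
  left : List BW
  head : BW
  right : List BW
  state : Fin M.Q

/-- Final configurations: the state is `qT` or `qF`. -/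
def Config.Final {M : TM} (C : Config M) : Prop := C.state = M.qT ∨ C.state = M.qF

/-- One machine transition, as a partial function (the relation `C →M D` is
    `M.step C = some D`). -/
def TM.step (M : TM) (C : Config M) : Option (Config M) :=
  match C.input[C.pos]? with
  | none => none
  | some b =>
    match M.δ b C.head C.state with
    | none => none
    | some (d, a', mv, s') =>
      let pos' : ℕ :=
        match d with
        | .minus => C.pos - 1
        | .plus => C.pos + 1
        | .zero => C.pos
      let w : List BW × BW × List BW :=
        match mv with
        | .stay => (C.left, a', C.right)
        | .left =>
          match C.left.getLast? with
          | none => ([], BW.wB, a' :: C.right)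
          | some a'' => (C.left.dropLast, a'', a' :: C.right)
        | .right =>
          match C.right with
          | [] => (C.left ++ [a'], BW.wB, [])
          | a'' :: r => (C.left ++ [a'], a'', r)
      some ⟨C.input, pos', w.1, w.2.1, w.2.2, s'⟩

/-- `n` machine transitions. -/
def TM.multiStep (M : TM) : ℕ → Config M → Option (Config M)
  | 0, C => some C
  | n + 1, C => (M.step C).bind (M.multiStep n)

/-- The fixed ordering `0 < 1 < L < R` of `B_I`. -/
def BI.toFin : BI → Fin 4
  | b0 => 0
  | b1 => 1
  | bL => 2
  | bR => 3

/-- The fixed ordering `0 < 1 < □` of `B_W`. -/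
def BW.toFin : BW → Fin 3
  | w0 => 0
  | w1 => 1
  | wB => 2

/-- Encoding of configurations:
    `⟨C⟩ = λx.(x ⟨i⟩ ⟨n̂⟩ ⟨w_l^R⟩ ⟨a⟩ ⟨w_r⟩ ⟨s⟩)`. -/
def encConfig {M : TM} (C : Config M) : Lam :=
  .lam (mkApps (.var 0)
    [encStr 4 (C.input.map BI.toFin),
     encBits (Nat.bits C.pos),
     encStr 3 (C.left.reverse.map BW.toFin),
     encChar 3 C.head.toFin,
     encStr 3 (C.right.map BW.toFin),
     encChar M.Q C.state])

/-- A bit as an input character. -/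
def bitToBI (b : Bool) : BI := if b then .b1 else .b0

/-- The initial configuration on binary input `i`: input tape `L·i·R`,
    input head at position `0`, empty work tape, initial state. -/
def initConfig (M : TM) (i : List Bool) : Config M :=
  ⟨BI.bL :: (i.map bitToBI) ++ [BI.bR], 0, [], BW.wB, [], M.qin⟩

/-- Scott-encoded booleans: `⟨true⟩ = λx.λy.x`, `⟨false⟩ = λx.λy.y`. -/
def encBool : Bool → Lam
  | true => .lam (.lam (.var 1))
  | false => .lam (.lam (.var 0))

namespace Lam

theorem ClosedUnder.mono {t : Lam} {d e : ℕ} (h : ClosedUnder d t) (hde : d ≤ e) :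
    ClosedUnder e t := by
  induction t generalizing d e with
  | var n => exact lt_of_lt_of_le h hde
  | lam t ih => exact ih h (by omega)
  | app t u iht ihu => exact ⟨iht h.1 hde, ihu h.2 hde⟩

theorem Closed.closedUnder {t : Lam} (h : Closed t) (d : ℕ) : ClosedUnder d t :=
  h.mono (Nat.zero_le d)

theorem ClosedUnder.lift_eq {t : Lam} {d e : ℕ} (h : ClosedUnder d t) (hde : d ≤ e) :
    lift e t = t := by
  induction t generalizing d e with
  | var n => simp only [lift, if_pos (lt_of_lt_of_le h hde)]
  | lam t ih => simp only [lift, ih (d := d + 1) (e := e + 1) h (by omega)]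
  | app t u iht ihu => simp only [lift, iht h.1 hde, ihu h.2 hde]

theorem ClosedUnder.subst_eq {t : Lam} {d k : ℕ} (h : ClosedUnder d t) (hdk : d ≤ k) (u : Lam) :
    subst t k u = t := by
  induction t generalizing d k u with
  | var n => simp only [subst, if_pos (lt_of_lt_of_le h hdk)]
  | lam t ih => simp only [subst, ih (d := d + 1) (k := k + 1) h (by omega)]
  | app t s iht ihs => simp only [subst, iht h.1 hdk, ihs h.2 hdk]

theorem Closed.lift_eq {t : Lam} (h : Closed t) (e : ℕ) : lift e t = t :=
  ClosedUnder.lift_eq h (Nat.zero_le e)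

theorem Closed.subst_eq {t : Lam} (h : Closed t) (k : ℕ) (u : Lam) : subst t k u = t :=
  ClosedUnder.subst_eq h (Nat.zero_le k) u

theorem subst_lift (t : Lam) (d : ℕ) (u : Lam) : subst (lift d t) d u = t := by
  induction t generalizing d u with
  | var n =>
    by_cases h : n < d
    · simp [lift, subst, h]
    · simp only [lift, subst, if_neg h, if_neg (show ¬ n + 1 < d by omega),
        if_neg (show n + 1 ≠ d by omega), Nat.add_sub_cancel]
  | lam t ih => simp only [lift, subst, ih]
  | app t s iht ihs => simp only [lift, subst, iht, ihs]

theorem subst_mkApps (t : Lam) (us : List Lam) (k : ℕ) (u : Lam) :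
    subst (mkApps t us) k u = mkApps (subst t k u) (us.map (subst · k u)) := by
  induction us generalizing t with
  | nil => rfl
  | cons v us ih => exact ih (app t v)

def I : Lam := lam (var 0)

theorem Step.I_app {v : Lam} (hv : v.IsValue) : Step (app I v) v :=
  .beta hv

end Lam

open Lam

theorem closedUnder_iterLam (n : ℕ) {d : ℕ} {t : Lam} (h : ClosedUnder (n + d) t) :
    ClosedUnder d (iterLam n t) := by
  induction n generalizing d with
  | zero => simpa [iterLam] using h
  | succ n ih => exact ih (d := d + 1) (by rwa [show n + (d + 1) = n + 1 + d by omega])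

theorem isValue_iterLam {n : ℕ} (t : Lam) (hn : 0 < n) : (iterLam n t).IsValue := by
  obtain ⟨n, rfl⟩ := Nat.exists_eq_add_of_lt hn
  trivial

theorem inDet_iterLam (n : ℕ) {t : Lam} (h : t.InDet) : (iterLam n t).InDet := by
  induction n with
  | zero => exact h
  | succ n ih => exact ih

theorem encChar_closed (k : ℕ) (a : Fin k) : (encChar k a).Closed :=
  closedUnder_iterLam k (show k - 1 - a < k + 0 by omega)

theorem encChar_isValue {k : ℕ} (a : Fin k) : (encChar k a).IsValue :=
  isValue_iterLam _ a.pos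

theorem encChar_inDet (k : ℕ) (a : Fin k) : (encChar k a).InDet :=
  inDet_iterLam k trivial

theorem encStr_closed (k : ℕ) (l : List (Fin k)) : (encStr k l).Closed := by
  induction l with
  | nil => exact closedUnder_iterLam (k + 1) (show 0 < k + 1 + 0 by omega)
  | cons a r ih =>
    refine closedUnder_iterLam (k + 1) ⟨?_, ih.closedUnder _⟩
    show k - a < k + 1 + 0
    omega

theorem encStr_isValue (k : ℕ) (l : List (Fin k)) : (encStr k l).IsValue := by
  cases l <;> exact isValue_iterLam _ (Nat.succ_pos k)

theorem encStr_inDet (k : ℕ) (l : List (Fin k)) : (encStr k l).InDet := by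
  induction l with
  | nil => exact inDet_iterLam _ trivial
  | cons a r ih => exact inDet_iterLam _ ⟨trivial, ih, encStr_isValue k r⟩

/-- `⟨C_in(i)⟩` with the input `⟨i⟩` left as the free variable `0`. -/
def initConfigTemplate (M : TM) : Lam :=
  .lam (mkApps (.var 0)
    [.var 1, encBits [], encStr 3 [], encChar 3 BW.wB.toFin, encStr 3 [], encChar M.Q M.qin])

theorem initConfigTemplate_closedUnder (M : TM) : ClosedUnder 1 (initConfigTemplate M) := by
  simp [initConfigTemplate, mkApps, ClosedUnder, encBits, (encStr_closed 3 []).closedUnder,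
    (encChar_closed 3 BW.wB.toFin).closedUnder, (encChar_closed M.Q M.qin).closedUnder]

theorem subst_initConfigTemplate (M : TM) (s : List Bool) :
    subst (initConfigTemplate M) 0 (encStr 4 ((initConfig M s).input.map BI.toFin)) =
      encConfig (initConfig M s) := by
  have hi := encStr_closed 4 ((initConfig M s).input.map BI.toFin)
  simp only [initConfigTemplate, subst, subst_mkApps, List.map, hi.lift_eq,
    (encStr_closed 3 []).subst_eq, (encChar_closed 3 BW.wB.toFin).subst_eq,
    (encChar_closed M.Q M.qin).subst_eq]
  simp [encConfig, initConfig, encBits, subst]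

/-- `init := λk.λi. I I I k ⟨C_in(i)⟩`; the identities only pad the two β-steps consuming `k`
and `i` to the five steps of the statement. -/
def initTerm (M : TM) : Lam :=
  .lam (.lam (mkApps I [I, I, .var 1, initConfigTemplate M]))

theorem initTerm_closed (M : TM) : (initTerm M).Closed := by
  simp [initTerm, mkApps, I, Closed, ClosedUnder, (initConfigTemplate_closedUnder M).mono]

theorem initTerm_inDet (M : TM) : (initTerm M).InDet := by
  simp only [initTerm, initConfigTemplate, mkApps, I, InDet, IsValue.eq_1, IsValue.eq_2, encBits,
    encStr_inDet, encStr_isValue, encChar_inDet, encChar_isValue, and_self]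

theorem initTerm_stepN (M : TM) {k v : Lam} (hk : k.IsValue) (hv : v.IsValue) :
    StepN 5 (.app (.app (initTerm M) k) v) (.app k (subst (initConfigTemplate M) 0 v)) := by
  have hI : I.IsValue := trivial
  have hc : (subst (initConfigTemplate M) 0 v).IsValue := trivial
  have hbody : subst (subst (mkApps I [I, I, .var 1, initConfigTemplate M]) 1 (lift 0 k)) 0 v =
      mkApps I [I, I, k, subst (initConfigTemplate M) 0 v] := by
    simp [subst_mkApps, subst, I, subst_lift, (initConfigTemplate_closedUnder M).subst_eq]
  refine .head (.appL hv (.beta hk)) (.head (.beta hv) ?_)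
  rw [hbody]
  refine .head (.appL hc (.appL hk (.appL hI (Step.I_app hI)))) ?_
  refine .head (.appL hc (.appL hk (Step.I_app hI))) ?_
  exact .head (.appL hc (Step.I_app hk)) (.refl _)

/-- turning the input string into the initial configuration: for every
    Turing machine `M` there is a closed term `init` of `Λ_det` such that for every
    value `k` and every input string `i = L·s·R` (with `s` a binary string),
    `init k ⟨i⟩ →det^5 k ⟨C_in(i)⟩`, where `C_in(i) = (i, 0 | ε, □, ε | s_in)`. -/
theorem init_term_correct (M : TM) :
    ∃ initTm : Lam, initTm.Closed ∧ initTm.InDet ∧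
      ∀ kont : Lam, kont.IsValue → kont.InDet → ∀ s : List Bool,
        Lam.StepN 5
          (.app (.app initTm kont) (encStr 4 ((initConfig M s).input.map BI.toFin)))
          (.app kont (encConfig (initConfig M s))) := by
  refine ⟨initTerm M, initTerm_closed M, initTerm_inDet M, fun kont hk _ s => ?_⟩
  rw [← subst_initConfigTemplate M s]
  exact initTerm_stepN M hk (encStr_isValue _ _)

end LogTM
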